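/- arXiv:1802.08658 — 5 statements merged into one kernel-verified Lean document; each statement's English description precedes it below -/
import Mathlib

section
/- Let p ≥ 1 and suppose f : ℝ → ℝ is differentiable with |f(x)| ≤ K|x|^p and |f'(x)| ≤ K|x|^{p-1} for all x ∈ ℝ, for some constant K > 0. Then there exists a constant C > 0 (depending only on K and p) such that for all x, z ∈ ℝ and all v > 0 with |z| ≤ v/2: | f(x+z)·1_{|x+z|>v} − f(x)·1_{|x|>v} | ≤ C ( |x|^p · 1_{|x| ≤ 2v} + |x|^{p-1}·|z| ). -/
/-- For a differentiable `f : ℝ → ℝ` with `|f x| ≤ K |x|^p` and `|f' x| ≤ K |x|^(p-1)`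
(`p ≥ 1`, `K > 0`), there is a constant `C > 0` such that for all `x, z ∈ ℝ` and `v > 0`
with `|z| ≤ v/2`:
`|f(x+z)·1_{|x+z|>v} − f(x)·1_{|x|>v}| ≤ C (|x|^p 1_{|x| ≤ 2v} + |x|^{p-1} |z|)`. -/
theorem indicator_truncation_difference_bound
    (p K : ℝ) (hp : 1 ≤ p) (hK : 0 < K) (f : ℝ → ℝ)
    (hdiff : Differentiable ℝ f)
    (hf : ∀ x : ℝ, |f x| ≤ K * |x| ^ p)
    (hf' : ∀ x : ℝ, |deriv f x| ≤ K * |x| ^ (p - 1)) :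
    ∃ C > 0, ∀ x z v : ℝ, 0 < v → |z| ≤ v / 2 →
      |(if v < |x + z| then f (x + z) else 0) - (if v < |x| then f x else 0)| ≤
        C * (|x| ^ p * (if |x| ≤ 2 * v then (1 : ℝ) else 0) + |x| ^ (p - 1) * |z|) := by
  have h2p1 : (1 : ℝ) ≤ (2 : ℝ) ^ p := by
    calc (1:ℝ) = (2:ℝ) ^ (0:ℝ) := by rw [Real.rpow_zero]
    _ ≤ (2:ℝ) ^ p := Real.rpow_le_rpow_of_exponent_le one_le_two (by linarith)
  refine ⟨K * 2 ^ p, by positivity, fun x z v hv hz => ?_⟩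
  have hp0 : (0 : ℝ) ≤ p - 1 := by linarith
  have hrhs2 : (0:ℝ) ≤ |x| ^ (p - 1) * |z| := by positivity
  have hind : (0:ℝ) ≤ |x| ^ p * (if |x| ≤ 2 * v then (1 : ℝ) else 0) := by
    positivity
  by_cases h1 : v < |x + z| <;> by_cases h2 : v < |x|
  · -- both indicators on
    rw [if_pos h1, if_pos h2]
    have hzx : |z| ≤ |x| := le_trans hz (by linarith)
    have key : |f (x + z) - f x| ≤ (K * (2 * |x|) ^ (p - 1)) * |z| := by
      have hconv : Convex ℝ (Metric.closedBall (0:ℝ) (2 * |x|)) := convex_closedBall _ _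
      have hx1 : x ∈ Metric.closedBall (0:ℝ) (2 * |x|) := by
        simp [Real.dist_eq]; linarith [abs_nonneg x]
      have hx2 : x + z ∈ Metric.closedBall (0:ℝ) (2 * |x|) := by
        simp only [Metric.mem_closedBall, Real.dist_eq, sub_zero]
        calc |x + z| ≤ |x| + |z| := abs_add_le _ _
        _ ≤ 2 * |x| := by linarith
      have bound : ∀ t ∈ Metric.closedBall (0:ℝ) (2 * |x|),
          ‖deriv f t‖ ≤ K * (2 * |x|) ^ (p - 1) := by
        intro t ht
        simp only [Metric.mem_closedBall, Real.dist_eq, sub_zero] at ht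
        refine le_trans (hf' t) ?_
        gcongr
      have := hconv.norm_image_sub_le_of_norm_deriv_le
        (fun t _ => hdiff.differentiableAt) bound hx1 hx2
      simpa [Real.norm_eq_abs, add_sub_cancel_left] using this
    refine le_trans key ?_
    have h2x : (K * (2 * |x|) ^ (p - 1)) * |z| ≤ K * 2 ^ p * (|x| ^ (p - 1) * |z|) := by
      rw [Real.mul_rpow (by norm_num) (abs_nonneg x)]
      have h21 : (2:ℝ) ^ (p-1) ≤ (2:ℝ) ^ p :=
        Real.rpow_le_rpow_of_exponent_le one_le_two (by linarith)
      have hb : (0:ℝ) ≤ |x| ^ (p-1) * |z| := hrhs2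
      have hgap := mul_nonneg (mul_nonneg hK.le (sub_nonneg.mpr h21)) hb
      nlinarith [Real.rpow_nonneg (abs_nonneg x) (p-1), abs_nonneg z]
    refine le_trans h2x ?_
    have : (0:ℝ) < K * 2 ^ p := by positivity
    nlinarith
  · -- |x+z| > v, |x| ≤ v
    push_neg at h2
    rw [if_pos h1, if_neg (not_lt.mpr h2), sub_zero]
    have hxhalf : v / 2 < |x| := by
      have : |x + z| ≤ |x| + |z| := abs_add_le _ _
      linarith
    have hzx : |z| ≤ |x| := le_trans hz (le_of_lt hxhalf)
    have hxz2 : |x + z| ≤ 2 * |x| := by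
      calc |x + z| ≤ |x| + |z| := abs_add_le _ _
      _ ≤ 2 * |x| := by linarith
    have hfb : |f (x + z)| ≤ K * (2 * |x|) ^ p := by
      refine le_trans (hf _) ?_
      gcongr
    have hcond : |x| ≤ 2 * v := by linarith
    rw [if_pos hcond]
    rw [Real.mul_rpow (by norm_num) (abs_nonneg x)] at hfb
    have : K * ((2:ℝ) ^ p * |x| ^ p) = K * 2 ^ p * (|x| ^ p * 1) := by ring
    rw [this] at hfb
    refine le_trans hfb ?_
    have : (0:ℝ) < K * 2 ^ p := by positivity
    nlinarith
  · -- |x+z| ≤ v, |x| > v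
    push_neg at h1
    rw [if_neg (not_lt.mpr h1), if_pos h2, zero_sub, abs_neg]
    have hcond : |x| ≤ 2 * v := by
      have h : |x| ≤ |x + z| + |z| := by
        calc |x| = |(x + z) + (-z)| := by ring_nf
        _ ≤ |x + z| + |(-z)| := abs_add_le _ _
        _ = |x + z| + |z| := by rw [abs_neg]
      linarith
    rw [if_pos hcond]
    have hfb : |f x| ≤ K * |x| ^ p := hf x
    have hKp : K * |x| ^ p ≤ K * 2 ^ p * (|x| ^ p * 1) := by
      have hxp : (0:ℝ) ≤ |x| ^ p := Real.rpow_nonneg (abs_nonneg x) p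
      have hgap := mul_nonneg (mul_nonneg hK.le hxp) (sub_nonneg.mpr h2p1)
      nlinarith
    refine le_trans hfb (le_trans hKp ?_)
    have : (0:ℝ) < K * 2 ^ p := by positivity
    nlinarith
  · rw [if_neg h1, if_neg h2, sub_zero, abs_zero]
    positivity
end

section
/- Let 0 < β < 2, let τ > 0, and define r̄ = 3τ, v̄ = τ/(1+3β), q = 2τ. Let α₀ > 0 and suppose h₁, h₂ : ℝ → ℝ₊ are measurable with h_i(z) ≤ C|z|^{-(1+β)} for all 0 < |z| ≤ 2α₀ and some C > 0. Then there exists K > 0 such that for all sufficiently small Δ > 0: ∫∫ 1_{|x−z| ≤ Δ^{r̄}} · 1_{Δ^{v̄}/2 < |x| ≤ α₀} · 1_{Δ^{v̄}/2 < |z| ≤ α₀} h₁(x) h₂(z) dx dz ≤ K·Δ^q. -/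
/-!
Bound `h₂` on the annulus `Δ^v̄/2 < |z|` by its value `C a^{-(1+β)}` at the inner radius
`a = Δ^v̄/2`. The inner integral over `z` then only sees the length `2Δ^r̄` of the window
`|x - z| ≤ Δ^r̄`, and the outer integral of `h₁` is dominated by the tail
`∫_{|x| > a} C|x|^{-(1+β)} dx = 2C a^{-β}/β`. Altogether the double integral is
`O(a^{-(1+2β)} Δ^{3τ}) = O(Δ^{3τ - v̄(1+2β)})`, and `v̄(1+2β) ≤ τ`
because `1+2β ≤ 1+3β`.
-/

open MeasureTheory ENNReal Set Metric

lemma lintegral_Ioi_rpow_of_lt {p c : ℝ} (hp : p < -1) (hc : 0 < c) :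
    ∫⁻ x in Ioi c, ENNReal.ofReal (x ^ p) = ENNReal.ofReal (-c ^ (p + 1) / (p + 1)) := by
  rw [← integral_Ioi_rpow_of_lt hp hc, ofReal_integral_eq_lintegral_ofReal
    (integrableOn_Ioi_rpow_of_lt hp hc)]
  filter_upwards [ae_restrict_mem measurableSet_Ioi] with x hx
  exact Real.rpow_nonneg (hc.trans hx).le p

lemma lintegral_lt_abs_rpow_neg_one_add {β c : ℝ} (hβ : 0 < β) (hc : 0 < c) :
    ∫⁻ x in {x : ℝ | c < |x|}, ENNReal.ofReal (|x| ^ (-(1 + β))) =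
      ENNReal.ofReal (2 * c ^ (-β) / β) := by
  set p := -(1 + β)
  set g : ℝ → ℝ≥0∞ := (Ioi c).indicator fun y ↦ ENNReal.ofReal (y ^ p)
  have hg : Measurable g :=
    (Measurable.ennreal_ofReal (measurable_id.pow_const p)).indicator measurableSet_Ioi
  have hsplit : ∀ x, {x : ℝ | c < |x|}.indicator (fun x ↦ ENNReal.ofReal (|x| ^ p)) x =
      g x + g (-x) := by
    intro x
    rcases le_or_gt 0 x with hx | hx
    · have : ¬ c < -x := by linarith
      simp [g, indicator, abs_of_nonneg hx, this]
    · have : ¬ c < x := by linarith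
      simp [g, indicator, abs_of_neg hx, this]
  rw [← lintegral_indicator (measurableSet_lt measurable_const continuous_abs.measurable),
    lintegral_congr hsplit, lintegral_add_left hg, lintegral_neg_eq_self (fun x ↦ g x),
    lintegral_indicator measurableSet_Ioi, lintegral_Ioi_rpow_of_lt (by linarith) hc, ← two_mul,
    ← ENNReal.ofReal_ofNat 2, ← ENNReal.ofReal_mul zero_le_two, show p + 1 = -β by ring]
  ring_nf

lemma lintegral_lintegral_mul_indicator_closedBall (F : ℝ → ℝ≥0∞) (m t : ℝ) :
    ∫⁻ x, ∫⁻ z, F x * (closedBall x t).indicator (fun _ ↦ ENNReal.ofReal m) z =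
      ENNReal.ofReal m * ENNReal.ofReal (2 * t) * ∫⁻ x, F x := by
  simp_rw [lintegral_const_mul _ (measurable_const.indicator measurableSet_closedBall),
    lintegral_indicator_const measurableSet_closedBall, Real.volume_closedBall]
  rw [lintegral_mul_const' _ _ (by finiteness), mul_comm]

lemma ofReal_window_annulus_integrand_le {p C a t α₀ : ℝ} {h₁ h₂ : ℝ → ℝ} (hp : p ≤ 0) (hC : 0 ≤ C)
    (ha : 0 < a) (hpos1 : ∀ z, 0 ≤ h₁ z)
    (hb1 : ∀ z, a < |z| → |z| ≤ α₀ → h₁ z ≤ C * |z| ^ p)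
    (hb2 : ∀ z, a < |z| → |z| ≤ α₀ → h₂ z ≤ C * |z| ^ p) (x z : ℝ) :
    ENNReal.ofReal ((if |x - z| ≤ t then (1 : ℝ) else 0) *
        (if a < |x| ∧ |x| ≤ α₀ then (1 : ℝ) else 0) *
        (if a < |z| ∧ |z| ≤ α₀ then (1 : ℝ) else 0) * h₁ x * h₂ z) ≤
      {y | a < |y|}.indicator (fun y ↦ ENNReal.ofReal (C * |y| ^ p)) x *
        (closedBall x t).indicator (fun _ ↦ ENNReal.ofReal (C * a ^ p)) z := by
  by_cases hxz : |x - z| ≤ t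
  · by_cases hx : a < |x| ∧ |x| ≤ α₀
    · by_cases hz : a < |z| ∧ |z| ≤ α₀
      · have hz' : z ∈ closedBall x t := by rwa [mem_closedBall, Real.dist_eq, abs_sub_comm]
        have h₂z : h₂ z ≤ C * a ^ p := (hb2 z hz.1 hz.2).trans <|
          mul_le_mul_of_nonneg_left (Real.rpow_le_rpow_of_nonpos ha hz.1.le hp) hC
        simp only [hxz, hx, hz, and_self, if_true, one_mul, indicator_of_mem hz',
          indicator_of_mem (show x ∈ {y | a < |y|} from hx.1)]
        rw [← ENNReal.ofReal_mul (mul_nonneg hC (Real.rpow_nonneg (abs_nonneg x) p))]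
        refine ENNReal.ofReal_le_ofReal ((mul_le_mul_of_nonneg_left h₂z (hpos1 x)).trans ?_)
        exact mul_le_mul_of_nonneg_right (hb1 x hx.1 hx.2)
          (mul_nonneg hC (Real.rpow_nonneg ha.le p))
      · simp [hz]
    · simp [hx]
  · simp [hxz]

lemma half_rpow_neg_mul_half_rpow_neg_mul_rpow_le {Δ β τ : ℝ} (hΔ : 0 < Δ) (hΔ1 : Δ ≤ 1)
    (hβ : 0 ≤ β) (hτ : 0 ≤ τ) :
    (Δ ^ (τ / (1 + 3 * β)) / 2) ^ (-(1 + β)) * (Δ ^ (τ / (1 + 3 * β)) / 2) ^ (-β) *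
      Δ ^ (3 * τ) ≤ 2 ^ (1 + 2 * β) * Δ ^ (2 * τ) := by
  have hβ1 : 0 < 1 + 3 * β := by linarith
  rw [← Real.rpow_add (by positivity), show -(1 + β) + -β = -(1 + 2 * β) by ring]
  have hexp : 2 * τ ≤ -(τ / (1 + 3 * β) * (1 + 2 * β)) + 3 * τ := by
    have : τ / (1 + 3 * β) * (1 + 2 * β) ≤ τ := by
      rw [div_mul_eq_mul_div, div_le_iff₀ hβ1]; nlinarith
    linarith
  calc (Δ ^ (τ / (1 + 3 * β)) / 2) ^ (-(1 + 2 * β)) * Δ ^ (3 * τ)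
      = 2 ^ (1 + 2 * β) * Δ ^ (-(τ / (1 + 3 * β) * (1 + 2 * β)) + 3 * τ) := by
        rw [Real.div_rpow (by positivity) zero_le_two, ← Real.rpow_mul hΔ.le,
          Real.rpow_neg zero_le_two, mul_neg, Real.rpow_neg hΔ.le, Real.rpow_add hΔ,
          Real.rpow_neg hΔ.le]
        field_simp
    _ ≤ 2 ^ (1 + 2 * β) * Δ ^ (2 * τ) :=
        mul_le_mul_of_nonneg_left (Real.rpow_le_rpow_of_exponent_ge hΔ hΔ1 hexp) (by positivity)

theorem double_integral_near_origin_bound_general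
    (β τ α₀ C : ℝ) (hβ0 : 0 < β) (hτ : 0 < τ) (hC : 0 < C)
    (h₁ h₂ : ℝ → ℝ)
    (hpos1 : ∀ z : ℝ, 0 ≤ h₁ z)
    (hb1 : ∀ z : ℝ, 0 < |z| → |z| ≤ 2 * α₀ → h₁ z ≤ C * |z| ^ (-(1 + β)))
    (hb2 : ∀ z : ℝ, 0 < |z| → |z| ≤ 2 * α₀ → h₂ z ≤ C * |z| ^ (-(1 + β))) :
    ∃ K > (0 : ℝ), ∃ Δ₀ > (0 : ℝ), ∀ Δ : ℝ, 0 < Δ → Δ < Δ₀ →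
      (∫⁻ x : ℝ, ∫⁻ z : ℝ, ENNReal.ofReal
          ((if |x - z| ≤ Δ ^ (3 * τ) then (1 : ℝ) else 0) *
           (if Δ ^ (τ / (1 + 3 * β)) / 2 < |x| ∧ |x| ≤ α₀ then (1 : ℝ) else 0) *
           (if Δ ^ (τ / (1 + 3 * β)) / 2 < |z| ∧ |z| ≤ α₀ then (1 : ℝ) else 0) *
           h₁ x * h₂ z)) ≤ ENNReal.ofReal (K * Δ ^ (2 * τ)) := by
  refine ⟨4 * C ^ 2 / β * 2 ^ (1 + 2 * β), by positivity, 1, one_pos, fun Δ hΔ hΔ1 ↦ ?_⟩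
  set a := Δ ^ (τ / (1 + 3 * β)) / 2
  set t := Δ ^ (3 * τ)
  have ha : 0 < a := by positivity
  have hb_annulus : ∀ h : ℝ → ℝ,
      (∀ z, 0 < |z| → |z| ≤ 2 * α₀ → h z ≤ C * |z| ^ (-(1 + β))) →
      ∀ z, a < |z| → |z| ≤ α₀ → h z ≤ C * |z| ^ (-(1 + β)) :=
    fun h hb z hza hzα ↦ hb z (ha.trans hza) (by linarith [ha.trans hza])
  calc _ ≤ ∫⁻ x, ∫⁻ z,
          {y | a < |y|}.indicator (fun y ↦ ENNReal.ofReal (C * |y| ^ (-(1 + β)))) x *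
          (closedBall x t).indicator (fun _ ↦ ENNReal.ofReal (C * a ^ (-(1 + β)))) z :=
        lintegral_mono fun x ↦ lintegral_mono fun z ↦
          ofReal_window_annulus_integrand_le (by linarith) hC.le ha hpos1
            (hb_annulus h₁ hb1) (hb_annulus h₂ hb2) x z
    _ = ENNReal.ofReal (C * a ^ (-(1 + β)) * (2 * t) * (C * (2 * a ^ (-β) / β))) := by
        simp_rw [lintegral_lintegral_mul_indicator_closedBall, ENNReal.ofReal_mul hC.le,
          lintegral_indicator (measurableSet_lt measurable_const continuous_abs.measurable),
          lintegral_const_mul' _ _ ofReal_ne_top, lintegral_lt_abs_rpow_neg_one_add hβ0 ha]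
        rw [← ENNReal.ofReal_mul, ← ENNReal.ofReal_mul, ← ENNReal.ofReal_mul,
          ← ENNReal.ofReal_mul]
        all_goals positivity
    _ ≤ ENNReal.ofReal (4 * C ^ 2 / β * 2 ^ (1 + 2 * β) * Δ ^ (2 * τ)) :=
        ENNReal.ofReal_le_ofReal <| calc
          _ = 4 * C ^ 2 / β * (a ^ (-(1 + β)) * a ^ (-β) * t) := by ring
          _ ≤ 4 * C ^ 2 / β * (2 ^ (1 + 2 * β) * Δ ^ (2 * τ)) :=
              mul_le_mul_of_nonneg_left
                (half_rpow_neg_mul_half_rpow_neg_mul_rpow_le hΔ hΔ1.le hβ0.le hτ.le)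
                (by positivity)
          _ = _ := by ring

/-- The double-integral estimate from the proof of Proposition 6.10 (easier) of the paper:
with `r̄ = 3τ`, `v̄ = τ/(1+3β)` and `q = 2τ`, densities bounded by `C|z|^{-(1+β)}` near the
origin satisfy
`∫∫ 1_{|x−z| ≤ Δ^r̄} 1_{Δ^v̄/2 < |x| ≤ α₀} 1_{Δ^v̄/2 < |z| ≤ α₀} h₁(x)h₂(z) dx dz ≤ K Δ^q`
for all sufficiently small `Δ > 0`. -/
theorem double_integral_near_origin_bound
    (β τ α₀ C : ℝ) (hβ0 : 0 < β) (hβ2 : β < 2) (hτ : 0 < τ) (hα : 0 < α₀) (hC : 0 < C)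
    (h₁ h₂ : ℝ → ℝ) (hm1 : Measurable h₁) (hm2 : Measurable h₂)
    (hpos1 : ∀ z : ℝ, 0 ≤ h₁ z) (hpos2 : ∀ z : ℝ, 0 ≤ h₂ z)
    (hb1 : ∀ z : ℝ, 0 < |z| → |z| ≤ 2 * α₀ → h₁ z ≤ C * |z| ^ (-(1 + β)))
    (hb2 : ∀ z : ℝ, 0 < |z| → |z| ≤ 2 * α₀ → h₂ z ≤ C * |z| ^ (-(1 + β))) :
    ∃ K > (0 : ℝ), ∃ Δ₀ > (0 : ℝ), ∀ Δ : ℝ, 0 < Δ → Δ < Δ₀ →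
      (∫⁻ x : ℝ, ∫⁻ z : ℝ, ENNReal.ofReal
          ((if |x - z| ≤ Δ ^ (3 * τ) then (1 : ℝ) else 0) *
           (if Δ ^ (τ / (1 + 3 * β)) / 2 < |x| ∧ |x| ≤ α₀ then (1 : ℝ) else 0) *
           (if Δ ^ (τ / (1 + 3 * β)) / 2 < |z| ∧ |z| ≤ α₀ then (1 : ℝ) else 0) *
           h₁ x * h₂ z)) ≤ ENNReal.ofReal (K * Δ ^ (2 * τ)) :=
  double_integral_near_origin_bound_general β τ α₀ C hβ0 hτ hC h₁ h₂ hpos1 hb1 hb2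
end

section
/- Let M > 0 and let h₁, h₂ : ℝ → ℝ₊ be measurable functions with h_i(z) ≤ C z^{-2} for all z ≥ M and some C > 0, and suppose h₁, h₂ are bounded on every set {z : 1/n ≤ |z| ≤ n}. Then for every α > 0 and every q with 0 < q < r̄ (where r̄ > 0 is fixed), one has ∫∫ 1_{|x−z| ≤ Δ^{r̄}}·1_{x > α}·1_{z > α}·h₁(x)h₂(z) dx dz = O(Δ^{r̄}) as Δ → 0; in particular this double integral is o(Δ^q). -/
open MeasureTheory ENNReal Set

/-!
On `(α, ∞)` both `h₁` and `h₂` are bounded (by the annulus bound up to some `n ≥ max M (1/α)`, and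
by `C / n²` beyond it), and `h₁` is integrable there, being bounded near `α` and `O(z⁻²)` at
infinity. For fixed `x`, the inner integral then runs over an interval of length `2Δ^rbar` with
integrand at most `h₁ x` times the bound for `h₂`, so the double integral is at most
`2 Δ^rbar · sup h₂ · ∫_α^∞ h₁ = O(Δ^rbar)`, which is `o(Δ^q)` since `Δ^rbar = Δ^(rbar-q) Δ^q`.
-/

theorem exists_forall_Ioi_le_of_le_div_sq {f : ℝ → ℝ} {M C α : ℝ} (hC : 0 ≤ C) (hα : 0 < α)
    (hdecay : ∀ z, M ≤ z → f z ≤ C / z ^ 2)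
    (hann : ∀ n : ℕ, 0 < n → ∃ B : ℝ, ∀ z : ℝ, 1 / (n : ℝ) ≤ |z| → |z| ≤ n → f z ≤ B) :
    ∃ B > 0, ∀ z, α < z → f z ≤ B := by
  obtain ⟨n, hn⟩ := exists_nat_gt (max M (1 / α))
  have hαn : 1 / α < n := (le_max_right _ _).trans_lt hn
  have hn0 : (0 : ℝ) < n := (one_div_pos.2 hα).trans hαn
  obtain ⟨B, hB⟩ := hann n (by exact_mod_cast hn0)
  refine ⟨max 1 (max B (C / n ^ 2)), lt_max_of_lt_left one_pos, fun z hz => ?_⟩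
  have hz0 : 0 < z := hα.trans hz
  refine le_max_of_le_right ?_
  rcases le_or_gt z n with hzn | hnz
  · have h1n : 1 / (n : ℝ) ≤ |z| := by
      rw [abs_of_pos hz0]
      exact ((one_div_lt hn0 hα).2 hαn).le.trans hz.le
    exact le_max_of_le_left (hB z h1n ((abs_of_pos hz0).trans_le hzn))
  · refine le_max_of_le_right ((hdecay z ?_).trans ?_)
    · exact ((le_max_left _ _).trans hn.le).trans hnz.le
    · exact div_le_div_of_nonneg_left hC (by positivity) (pow_le_pow_left₀ hn0.le hnz.le 2)

theorem setLIntegral_Ioi_ofReal_lt_top_of_le_div_sq {f : ℝ → ℝ} {N C : ℝ} (hN : 0 < N)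
    (hdecay : ∀ x, N < x → f x ≤ C / x ^ 2) :
    ∫⁻ x in Ioi N, ENNReal.ofReal (f x) < ⊤ := by
  have hrpow : ∀ x, N < x → C / x ^ 2 = C * x ^ (-2 : ℝ) := fun x hx => by
    rw [Real.rpow_neg (hN.trans hx).le, ← Real.rpow_natCast x 2, Nat.cast_ofNat, div_eq_mul_inv]
  calc ∫⁻ x in Ioi N, ENNReal.ofReal (f x)
      ≤ ∫⁻ x in Ioi N, ENNReal.ofReal (C * x ^ (-2 : ℝ)) :=
        setLIntegral_mono' measurableSet_Ioi fun x hx =>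
          ENNReal.ofReal_le_ofReal ((hdecay x hx).trans (hrpow x hx).le)
    _ < ⊤ := ((integrableOn_Ioi_rpow_of_lt (by norm_num) hN).const_mul C).lintegral_lt_top

theorem setLIntegral_Ioi_ofReal_lt_top {f : ℝ → ℝ} {α N B C : ℝ} (hαN : α ≤ N) (hN : 0 < N)
    (hbdd : ∀ x, α < x → f x ≤ B) (hdecay : ∀ x, N < x → f x ≤ C / x ^ 2) :
    ∫⁻ x in Ioi α, ENNReal.ofReal (f x) < ⊤ := by
  rw [← Ioc_union_Ioi_eq_Ioi hαN, lintegral_union measurableSet_Ioi Ioc_disjoint_Ioi_same]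
  refine ENNReal.add_lt_top.2 ⟨?_, setLIntegral_Ioi_ofReal_lt_top_of_le_div_sq hN hdecay⟩
  calc ∫⁻ x in Ioc α N, ENNReal.ofReal (f x)
      ≤ ∫⁻ _ in Ioc α N, ENNReal.ofReal B :=
        setLIntegral_mono' measurableSet_Ioc fun x hx => ENNReal.ofReal_le_ofReal (hbdd x hx.1)
    _ < ⊤ := by simp [Real.volume_Ioc, ENNReal.mul_lt_top]

section NearDiagonal

variable {f g : ℝ → ℝ} {α δ B : ℝ}

theorem ofReal_nearDiagonal_le (hf : ∀ x, 0 ≤ f x) (hg : ∀ z, α < z → g z ≤ B) (x z : ℝ) :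
    ENNReal.ofReal ((if |x - z| ≤ δ then (1 : ℝ) else 0) * (if α < x then (1 : ℝ) else 0) *
        (if α < z then (1 : ℝ) else 0) * f x * g z) ≤
      (Ioi α).indicator (fun x => ENNReal.ofReal (f x)) x *
        (Icc (x - δ) (x + δ)).indicator (fun _ => ENNReal.ofReal B) z := by
  by_cases hxz : |x - z| ≤ δ
  · by_cases hx : α < x
    · by_cases hz : α < z
      · have hzI : z ∈ Icc (x - δ) (x + δ) := by
          rw [abs_le] at hxz
          constructor <;> linarith
        simp only [hxz, hx, hz, if_true, one_mul, indicator_of_mem (mem_Ioi.2 hx),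
          indicator_of_mem hzI, ← ENNReal.ofReal_mul (hf x)]
        exact ENNReal.ofReal_le_ofReal (mul_le_mul_of_nonneg_left (hg z hz) (hf x))
      · simp [hz]
    · simp [hx]
  · simp [hxz]

theorem lintegral_lintegral_nearDiagonal_le (hf : ∀ x, 0 ≤ f x) (hg : ∀ z, α < z → g z ≤ B) :
    ∫⁻ x, ∫⁻ z, ENNReal.ofReal ((if |x - z| ≤ δ then (1 : ℝ) else 0) *
        (if α < x then (1 : ℝ) else 0) * (if α < z then (1 : ℝ) else 0) * f x * g z) ≤
      (∫⁻ x in Ioi α, ENNReal.ofReal (f x)) * (ENNReal.ofReal B * ENNReal.ofReal (2 * δ)) := by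
  calc _ ≤ ∫⁻ x, ∫⁻ z, (Ioi α).indicator (fun x => ENNReal.ofReal (f x)) x *
          (Icc (x - δ) (x + δ)).indicator (fun _ => ENNReal.ofReal B) z :=
        lintegral_mono fun x => lintegral_mono fun z => ofReal_nearDiagonal_le hf hg x z
    _ = ∫⁻ x, (Ioi α).indicator (fun x => ENNReal.ofReal (f x)) x *
          (ENNReal.ofReal B * ENNReal.ofReal (2 * δ)) := by
        congr 1 with x
        rw [lintegral_const_mul _ (measurable_const.indicator measurableSet_Icc),
          lintegral_indicator_const measurableSet_Icc, Real.volume_Icc,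
          show x + δ - (x - δ) = 2 * δ by ring]
    _ = _ := by
        rw [lintegral_mul_const' _ _ (by finiteness), lintegral_indicator measurableSet_Ioi]

end NearDiagonal

theorem exists_forall_mul_rpow_le_mul_rpow {K ε q r : ℝ} (hK : 0 < K) (hε : 0 < ε) (hqr : q < r) :
    ∃ Δ₀ > (0 : ℝ), ∀ Δ : ℝ, 0 < Δ → Δ < Δ₀ → K * Δ ^ r ≤ ε * Δ ^ q := by
  have hp : 0 < r - q := sub_pos.2 hqr
  have hεK : 0 < ε / K := div_pos hε hK
  refine ⟨(ε / K) ^ (r - q)⁻¹, Real.rpow_pos_of_pos hεK _, fun Δ hΔ hΔ₀ => ?_⟩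
  have hsmall : Δ ^ (r - q) < ε / K := by
    simpa [Real.rpow_inv_rpow hεK.le hp.ne'] using Real.rpow_lt_rpow hΔ.le hΔ₀ hp
  calc K * Δ ^ r = (K * Δ ^ (r - q)) * Δ ^ q := by
        rw [mul_assoc, ← Real.rpow_add hΔ, sub_add_cancel]
    _ ≤ ε * Δ ^ q := by
        gcongr
        exact ((lt_div_iff₀' hK).1 hsmall).le

theorem double_integral_tail_bound_general
    (M C rbar : ℝ) (hC : 0 < C)
    (h₁ h₂ : ℝ → ℝ)
    (hpos1 : ∀ z : ℝ, 0 ≤ h₁ z)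
    (hb1 : ∀ z : ℝ, M ≤ z → h₁ z ≤ C / z ^ 2)
    (hb2 : ∀ z : ℝ, M ≤ z → h₂ z ≤ C / z ^ 2)
    (hbdd : ∀ n : ℕ, 0 < n → ∃ B : ℝ, ∀ z : ℝ, 1 / (n : ℝ) ≤ |z| → |z| ≤ (n : ℝ) →
      h₁ z ≤ B ∧ h₂ z ≤ B)
    (α : ℝ) (hα : 0 < α)
    (I : ℝ → ℝ≥0∞)
    (hI : ∀ Δ : ℝ, I Δ = ∫⁻ x : ℝ, ∫⁻ z : ℝ, ENNReal.ofReal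
        ((if |x - z| ≤ Δ ^ rbar then (1 : ℝ) else 0) *
         (if α < x then (1 : ℝ) else 0) *
         (if α < z then (1 : ℝ) else 0) * h₁ x * h₂ z)) :
    (∃ K > (0 : ℝ), ∃ Δ₀ > (0 : ℝ), ∀ Δ : ℝ, 0 < Δ → Δ < Δ₀ →
        I Δ ≤ ENNReal.ofReal (K * Δ ^ rbar)) ∧
    (∀ q : ℝ, 0 < q → q < rbar → ∀ ε > (0 : ℝ), ∃ Δ₀ > (0 : ℝ), ∀ Δ : ℝ, 0 < Δ → Δ < Δ₀ →
        I Δ ≤ ENNReal.ofReal (ε * Δ ^ q)) := by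
  obtain ⟨B₁, -, hB₁⟩ := exists_forall_Ioi_le_of_le_div_sq hC.le hα hb1
    fun n hn => (hbdd n hn).imp fun _ hB z h1 h2 => (hB z h1 h2).1
  obtain ⟨B₂, hB₂, hB₂'⟩ := exists_forall_Ioi_le_of_le_div_sq hC.le hα hb2
    fun n hn => (hbdd n hn).imp fun _ hB z h1 h2 => (hB z h1 h2).2
  set A := ∫⁻ x in Ioi α, ENNReal.ofReal (h₁ x)
  have hA : A ≠ ⊤ := (setLIntegral_Ioi_ofReal_lt_top (le_max_left α M)
    (hα.trans_le (le_max_left _ _)) hB₁ fun x hx => hb1 x ((le_max_right _ _).trans hx.le)).ne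
  set K := (A.toReal + 1) * (2 * B₂)
  have hK : 0 < K := by positivity
  have hIK : ∀ Δ, I Δ ≤ ENNReal.ofReal (K * Δ ^ rbar) := fun Δ => by
    rw [hI, mul_assoc, ENNReal.ofReal_mul (by positivity)]
    refine (lintegral_lintegral_nearDiagonal_le hpos1 hB₂').trans (mul_le_mul' ?_ ?_)
    · exact (ENNReal.ofReal_toReal hA).symm.le.trans (ENNReal.ofReal_le_ofReal (by linarith))
    · rw [← ENNReal.ofReal_mul hB₂.le, ← mul_assoc, mul_comm B₂]
  refine ⟨⟨K, hK, 1, one_pos, fun Δ _ _ => hIK Δ⟩, fun q _ hqr ε hε => ?_⟩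
  obtain ⟨Δ₀, hΔ₀, hle⟩ := exists_forall_mul_rpow_le_mul_rpow hK hε hqr
  exact ⟨Δ₀, hΔ₀, fun Δ hΔ hΔΔ₀ => (hIK Δ).trans (ENNReal.ofReal_le_ofReal (hle Δ hΔ hΔΔ₀))⟩

/-- The tail double-integral estimate from the proof of Proposition 6.10 of the paper:
if `h₁, h₂` are bounded on annuli `{1/n ≤ |z| ≤ n}` and satisfy `h_i(z) ≤ C z⁻²` for
`z ≥ M`, then `∫∫ 1_{|x−z| ≤ Δ^rbar} 1_{x>α} 1_{z>α} h₁(x)h₂(z) dx dz = O(Δ^rbar)` as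
`Δ → 0`, and in particular this integral is `o(Δ^q)` for every `0 < q < rbar`. -/
theorem double_integral_tail_bound
    (M C rbar : ℝ) (hM : 0 < M) (hC : 0 < C) (hr : 0 < rbar)
    (h₁ h₂ : ℝ → ℝ) (hm1 : Measurable h₁) (hm2 : Measurable h₂)
    (hpos1 : ∀ z : ℝ, 0 ≤ h₁ z) (hpos2 : ∀ z : ℝ, 0 ≤ h₂ z)
    (hb1 : ∀ z : ℝ, M ≤ z → h₁ z ≤ C / z ^ 2)
    (hb2 : ∀ z : ℝ, M ≤ z → h₂ z ≤ C / z ^ 2)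
    (hbdd : ∀ n : ℕ, 0 < n → ∃ B : ℝ, ∀ z : ℝ, 1 / (n : ℝ) ≤ |z| → |z| ≤ (n : ℝ) →
      h₁ z ≤ B ∧ h₂ z ≤ B)
    (α : ℝ) (hα : 0 < α)
    (I : ℝ → ℝ≥0∞)
    (hI : ∀ Δ : ℝ, I Δ = ∫⁻ x : ℝ, ∫⁻ z : ℝ, ENNReal.ofReal
        ((if |x - z| ≤ Δ ^ rbar then (1 : ℝ) else 0) *
         (if α < x then (1 : ℝ) else 0) *
         (if α < z then (1 : ℝ) else 0) * h₁ x * h₂ z)) :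
    (∃ K > (0 : ℝ), ∃ Δ₀ > (0 : ℝ), ∀ Δ : ℝ, 0 < Δ → Δ < Δ₀ →
        I Δ ≤ ENNReal.ofReal (K * Δ ^ rbar)) ∧
    (∀ q : ℝ, 0 < q → q < rbar → ∀ ε > (0 : ℝ), ∃ Δ₀ > (0 : ℝ), ∀ Δ : ℝ, 0 < Δ → Δ < Δ₀ →
        I Δ ≤ ENNReal.ofReal (ε * Δ ^ q)) :=
  double_integral_tail_bound_general M C rbar hC h₁ h₂ hpos1 hb1 hb2 hbdd α hα I hI
end

section
/- Let ν₁ ≠ ν₂ be finite signed measures on ℝ (arising as ρ(z)νᵢ(dz) for Lévy measures νᵢ integrating ρ), let θ₀ ∈ (0,1), and define N_i(t) = νᵢ((−∞, t]) for i = 1,2 and V₀ = sup_{t∈ℝ} |N₁(t) − N₂(t)| > 0. For 0 ≤ s ≤ θ ≤ 1 and t ∈ ℝ set D(s, θ, t) = F(s, t) − (s/θ)·F(θ, t), where F(s, t) = min(s, θ₀)·N₁(t) + max(s − θ₀, 0)·N₂(t) (with the convention 0/0 = 1). Then for every θ ∈ (θ₀, 1]: sup_{t∈ℝ} sup_{0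 ≤ s ≤ θ' ≤ θ} |D(s, θ', t)| = V₀·θ₀·(1 − θ₀/θ). -/
/-!
Since `min s θ₀ + max (s - θ₀) 0 = s`, the `N₂`-coefficient of `D(s, θ', t)` is minus its
`N₁`-coefficient, so `D(s, θ', t) = w(s, θ') (N₁ t - N₂ t)` with a weight
`w = timeVariationWeight θ₀` independent of `t`.
For `0 ≤ s ≤ θ' ≤ θ` the weight lies in `[0, θ₀ (1 - θ₀ / θ)]`, the upper bound being attained at
`s = θ₀`, `θ' = θ`; hence the double supremum factorises as `θ₀ (1 - θ₀ / θ) · V₀`.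
`V₀ > 0` because a finite signed measure on `ℝ` is determined by its distribution function.
-/

open MeasureTheory Set Filter Topology

namespace MeasureTheory.SignedMeasure

theorem ext_of_Iic {ν₁ ν₂ : SignedMeasure ℝ}
    (h : ∀ t, ν₁ (Iic t) = ν₂ (Iic t)) : ν₁ = ν₂ := by
  have hunion : ⋃ n : ℕ, Iic (n : ℝ) = univ :=
    iUnion_Iic_of_not_bddAbove_range <| not_bddAbove_iff.2 fun x =>
      let ⟨n, hn⟩ := exists_nat_gt x
      ⟨n, ⟨n, rfl⟩, hn⟩
  have hmono : Monotone fun n : ℕ => Iic (n : ℝ) := fun _ _ hmn =>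
    Iic_subset_Iic.2 (Nat.cast_le.2 hmn)
  -- `univ` is not of the form `Iic t`; its mass is recovered as the limit along `Iic n`
  have hlim (ν : SignedMeasure ℝ) : Tendsto (fun n : ℕ => ν (Iic n)) atTop (𝓝 (ν univ)) :=
    hunion ▸ VectorMeasure.tendsto_vectorMeasure_iUnion_atTop_nat hmono fun _ => measurableSet_Iic
  refine VectorMeasure.ext_of_generateFrom (range Iic) (by rintro _ ⟨t, rfl⟩; exact h t)
    (BorelSpace.measurable_eq.trans (borel_eq_generateFrom_Iic ℝ)) isPiSystem_Iic ?_
  exact tendsto_nhds_unique (hlim ν₁) (by simpa only [h] using hlim ν₂)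

theorem abs_apply_le_totalVariation_univ {α : Type*} [MeasurableSpace α]
    (ν : SignedMeasure α) (s : Set α) : |ν s| ≤ ν.totalVariation.real univ :=
  (ν.norm_le_totalVariation s).trans (measureReal_mono (subset_univ s))

end MeasureTheory.SignedMeasure

theorem csSup_eq_mul_csSup_of_forall_le {ι : Type*} [Nonempty ι] {S : Set ℝ} {g : ι → ℝ} {c : ℝ}
    (hc : 0 ≤ c) (hg : BddAbove (range g)) (hle : ∀ r ∈ S, ∃ i, r ≤ c * g i)
    (hmem : ∀ i, c * g i ∈ S) : sSup S = c * sSup (range g) := by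
  have hbound : ∀ r ∈ S, r ≤ c * sSup (range g) := fun r hr =>
    let ⟨i, hi⟩ := hle r hr
    hi.trans (mul_le_mul_of_nonneg_left (le_csSup hg ⟨i, rfl⟩) hc)
  refine le_antisymm (csSup_le ⟨_, hmem (Classical.arbitrary ι)⟩ hbound) ?_
  rw [← smul_eq_mul, ← Real.sSup_smul_of_nonneg hc]
  exact csSup_le_csSup ⟨_, hbound⟩ (range_nonempty g).smul_set
    (by rintro _ ⟨_, ⟨i, rfl⟩, rfl⟩; exact hmem i)

noncomputable def timeVariationWeight (θ₀ s θ : ℝ) : ℝ := min s θ₀ - s / θ * min θ θ₀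

theorem sub_div_mul_eq_timeVariationWeight_mul {θ₀ s θ : ℝ} (a b : ℝ) (h : θ = 0 → s = 0) :
    min s θ₀ * a + max (s - θ₀) 0 * b - s / θ * (min θ θ₀ * a + max (θ - θ₀) 0 * b) =
      timeVariationWeight θ₀ s θ * (a - b) := by
  have hmax (x : ℝ) : max (x - θ₀) 0 = x - min x θ₀ := by
    rw [← max_sub_sub_left, sub_self, max_comm]
  rw [hmax, hmax, timeVariationWeight]
  linear_combination (-b) * div_mul_cancel_of_imp h

theorem timeVariationWeight_self_left {θ₀ θ : ℝ} (h : θ₀ ≤ θ) :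
    timeVariationWeight θ₀ θ₀ θ = θ₀ * (1 - θ₀ / θ) := by
  rw [timeVariationWeight, min_self, min_eq_right h]
  ring

theorem abs_timeVariationWeight_le {θ₀ s θ' θ : ℝ} (h₀ : 0 ≤ θ₀) (hθ₀ : θ₀ ≤ θ) (hs : 0 ≤ s)
    (hsθ' : s ≤ θ') (hθ' : θ' ≤ θ) : |timeVariationWeight θ₀ s θ'| ≤ θ₀ * (1 - θ₀ / θ) := by
  rcases le_or_gt θ' θ₀ with hle | hlt
  · have hzero : timeVariationWeight θ₀ s θ' = 0 := by
      rw [timeVariationWeight, min_eq_left (hsθ'.trans hle), min_eq_left hle,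
        div_mul_cancel_of_imp fun h => le_antisymm (h ▸ hsθ') hs, sub_self]
    rw [hzero, abs_zero]
    exact mul_nonneg h₀ (sub_nonneg.2 (div_le_one_of_le₀ hθ₀ (h₀.trans hθ₀)))
  · have hθ'pos : 0 < θ' := h₀.trans_lt hlt
    have hbounds : 0 ≤ timeVariationWeight θ₀ s θ' ∧
        timeVariationWeight θ₀ s θ' ≤ θ₀ * (1 - θ₀ / θ') := by
      have hw : timeVariationWeight θ₀ s θ' = (min s θ₀ * θ' - s * θ₀) / θ' := by
        rw [timeVariationWeight, min_eq_right hlt.le]; field_simp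
      have hbound : θ₀ * (1 - θ₀ / θ') = θ₀ * (θ' - θ₀) / θ' := by field_simp
      rw [hw, hbound]
      refine ⟨div_nonneg ?_ hθ'pos.le, div_le_div_of_nonneg_right ?_ hθ'pos.le⟩ <;>
        rcases min_cases s θ₀ with ⟨hm, hsθ₀⟩ | ⟨hm, hsθ₀⟩ <;> rw [hm] <;> nlinarith
    rw [abs_of_nonneg hbounds.1]
    refine hbounds.2.trans (mul_le_mul_of_nonneg_left ?_ h₀)
    gcongr

theorem abrupt_change_time_variation_general
    (ν₁ ν₂ : MeasureTheory.SignedMeasure ℝ) (hne : ν₁ ≠ ν₂)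
    (θ₀ : ℝ) (h0 : 0 < θ₀)
    (N₁ N₂ : ℝ → ℝ)
    (hN₁ : ∀ t : ℝ, N₁ t = ν₁ (Set.Iic t)) (hN₂ : ∀ t : ℝ, N₂ t = ν₂ (Set.Iic t))
    (V₀ : ℝ) (hV₀ : V₀ = sSup (Set.range fun t : ℝ => |N₁ t - N₂ t|))
    (F : ℝ → ℝ → ℝ) (hF : ∀ s t : ℝ, F s t = min s θ₀ * N₁ t + max (s - θ₀) 0 * N₂ t)
    (D : ℝ → ℝ → ℝ → ℝ) (hD : ∀ s θ t : ℝ, D s θ t = F s t - (s / θ) * F θ t) :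
    0 < V₀ ∧ ∀ θ : ℝ, θ₀ < θ → θ ≤ 1 →
      sSup {r : ℝ | ∃ t s θ' : ℝ, 0 ≤ s ∧ s ≤ θ' ∧ θ' ≤ θ ∧ r = |D s θ' t|} =
        V₀ * θ₀ * (1 - θ₀ / θ) := by
  have hbdd : BddAbove (range fun t => |N₁ t - N₂ t|) := by
    refine ⟨(ν₁ - ν₂).totalVariation.real univ, ?_⟩
    rintro _ ⟨t, rfl⟩
    simpa only [hN₁, hN₂, sub_apply] using (ν₁ - ν₂).abs_apply_le_totalVariation_univ (Iic t)
  obtain ⟨t₀, ht₀⟩ : ∃ t, N₁ t ≠ N₂ t := by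
    by_contra! h
    exact hne (SignedMeasure.ext_of_Iic fun t => by rw [← hN₁, ← hN₂, h])
  have hD' (s θ' t : ℝ) (hs : 0 ≤ s) (hsθ' : s ≤ θ') :
      D s θ' t = timeVariationWeight θ₀ s θ' * (N₁ t - N₂ t) := by
    rw [hD, hF, hF]
    exact sub_div_mul_eq_timeVariationWeight_mul _ _ fun h => le_antisymm (h ▸ hsθ') hs
  refine ⟨hV₀ ▸ (abs_pos.2 (sub_ne_zero.2 ht₀)).trans_le (le_csSup hbdd ⟨t₀, rfl⟩),
    fun θ hθ _ => ?_⟩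
  have hweight := abs_timeVariationWeight_le h0.le hθ.le h0.le hθ.le le_rfl
  rw [mul_assoc, mul_comm, hV₀]
  refine csSup_eq_mul_csSup_of_forall_le ((abs_nonneg _).trans hweight) hbdd ?_ fun t => ?_
  · rintro _ ⟨t, s, θ', hs, hsθ', hθ', rfl⟩
    refine ⟨t, ?_⟩
    rw [hD' s θ' t hs hsθ', abs_mul]
    exact mul_le_mul_of_nonneg_right
      (abs_timeVariationWeight_le h0.le hθ.le hs hsθ' hθ') (abs_nonneg _)
  · refine ⟨t, θ₀, θ, h0.le, hθ.le, le_rfl, ?_⟩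
    rw [hD' θ₀ θ t h0.le hθ.le, timeVariationWeight_self_left hθ.le, abs_mul,
      abs_of_nonneg ((abs_nonneg _).trans hweight)]

/-- Example 4.1 of the paper: for the abrupt-change kernel built from two distinct finite
signed measures `ν₁ ≠ ν₂` with distribution functions `N₁, N₂`, the measure of time
variation satisfies, for every `θ ∈ (θ₀, 1]`,
`sup_{t} sup_{0 ≤ s ≤ θ' ≤ θ} |D(s, θ', t)| = V₀ θ₀ (1 − θ₀/θ)`,
where `V₀ = sup_t |N₁(t) − N₂(t)| > 0`. -/
theorem abrupt_change_time_variation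
    (ν₁ ν₂ : MeasureTheory.SignedMeasure ℝ) (hne : ν₁ ≠ ν₂)
    (θ₀ : ℝ) (h0 : 0 < θ₀) (h1 : θ₀ < 1)
    (N₁ N₂ : ℝ → ℝ)
    (hN₁ : ∀ t : ℝ, N₁ t = ν₁ (Set.Iic t)) (hN₂ : ∀ t : ℝ, N₂ t = ν₂ (Set.Iic t))
    (V₀ : ℝ) (hV₀ : V₀ = sSup (Set.range fun t : ℝ => |N₁ t - N₂ t|))
    (F : ℝ → ℝ → ℝ) (hF : ∀ s t : ℝ, F s t = min s θ₀ * N₁ t + max (s - θ₀) 0 * N₂ t)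
    (D : ℝ → ℝ → ℝ → ℝ) (hD : ∀ s θ t : ℝ, D s θ t = F s t - (s / θ) * F θ t) :
    0 < V₀ ∧ ∀ θ : ℝ, θ₀ < θ → θ ≤ 1 →
      sSup {r : ℝ | ∃ t s θ' : ℝ, 0 ≤ s ∧ s ≤ θ' ∧ θ' ≤ θ ∧ r = |D s θ' t|} =
        V₀ * θ₀ * (1 - θ₀ / θ) :=
  abrupt_change_time_variation_general ν₁ ν₂ hne θ₀ h0 N₁ N₂ hN₁ hN₂ V₀ hV₀ F hF D hD
end

section
/- Let P : U → ℝ and A : U → ℝ be differentiable functions on an open interval U, with P(y) > 1 and A(y) > 0 for all y ∈ U, and let Ψ : U → ℝ be differentiable, and K > 0. Suppose that for every y ∈ U and every t ≥ 2: Ψ(y) + K·(A(y)/(1−P(y)))·t^{1−P(y)} is constant in y (i.e., equals some function N₀(t) independent of y). Then P' ≡ 0, A' ≡ 0, and Ψ' ≡ 0 on U. -/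
open Filter Real Topology

/-! Two functions `u + c t^a` and `v + d t^b` with `a, b < 0` that agree for large `t` have the same
limit `u = v` at infinity, and then `c t^a = d t^b` at `t = s` and `t = s²` forces `a = b` and
`c = d` as soon as `c ≠ 0`. Hence `Ψ`, `P` and `A` are determined pointwise by the family, so they
are constant on `U`, and since `U` is open their derivatives vanish. -/

theorem tendsto_add_mul_rpow_atTop {e : ℝ} (he : e < 0) (u c : ℝ) :
    Tendsto (fun t : ℝ => u + c * t ^ e) atTop (𝓝 u) := by
  have hpow : Tendsto (fun t : ℝ => t ^ e) atTop (𝓝 0) := by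
    simpa using tendsto_rpow_neg_atTop (neg_pos.2 he)
  simpa using (hpow.const_mul c).const_add u

theorem eq_and_eq_of_eventually_mul_rpow_eq {a b c d : ℝ} (hc : c ≠ 0)
    (h : ∀ᶠ t in atTop, c * t ^ a = d * t ^ b) : a = b ∧ c = d := by
  obtain ⟨T, hT⟩ := eventually_atTop.1 h
  set s := max T 2
  have hs : 1 < s := lt_of_lt_of_le one_lt_two (le_max_right T 2)
  have hs0 : 0 < s := one_pos.trans hs
  have h₁ : c * s ^ a = d * s ^ b := hT s (le_max_left T 2)
  have h₂ : c * s ^ a * s ^ a = d * s ^ b * s ^ b := by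
    have := hT (s * s) ((le_max_left T 2).trans (le_mul_of_one_le_right hs0.le hs.le))
    rwa [mul_rpow hs0.le hs0.le, mul_rpow hs0.le hs0.le, ← mul_assoc, ← mul_assoc] at this
  have hne : d * s ^ b ≠ 0 := h₁ ▸ mul_ne_zero hc (rpow_pos_of_pos hs0 a).ne'
  have hpow : s ^ a = s ^ b := mul_left_cancel₀ hne (by rw [← h₁, h₂, h₁])
  refine ⟨(rpow_right_inj hs0 hs.ne').1 hpow, ?_⟩
  rw [hpow] at h₁
  exact mul_right_cancel₀ (rpow_pos_of_pos hs0 b).ne' h₁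

theorem eq_and_eq_of_eventually_add_mul_rpow_eq {u v a b c d : ℝ} (ha : a < 0) (hb : b < 0)
    (hc : c ≠ 0) (h : ∀ᶠ t in atTop, u + c * t ^ a = v + d * t ^ b) :
    u = v ∧ a = b ∧ c = d := by
  have huv : u = v := tendsto_nhds_unique
    ((tendsto_add_mul_rpow_atTop ha u c).congr' h) (tendsto_add_mul_rpow_atTop hb v d)
  refine ⟨huv, eq_and_eq_of_eventually_mul_rpow_eq hc ?_⟩
  filter_upwards [h] with t ht
  rw [huv] at ht
  exact add_left_cancel ht

theorem eq_and_eq_of_eventually_add_div_mul_rpow_eq {K p q α β u v : ℝ} (hK : K ≠ 0)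
    (hp : 1 < p) (hq : 1 < q) (hα : α ≠ 0)
    (h : ∀ᶠ t in atTop,
      u + K * (α / (1 - p)) * t ^ (1 - p) = v + K * (β / (1 - q)) * t ^ (1 - q)) :
    u = v ∧ p = q ∧ α = β := by
  have hp' : 1 - p ≠ 0 := by linarith
  obtain ⟨huv, hpq, hαβ⟩ := eq_and_eq_of_eventually_add_mul_rpow_eq (by linarith) (by linarith)
    (mul_ne_zero hK (div_ne_zero hα hp')) h
  have hpq : p = q := by linarith
  subst hpq
  exact ⟨huv, rfl, (div_left_inj' hp').1 (mul_left_cancel₀ hK hαβ)⟩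

theorem HasDerivAt.eq_zero_of_eventuallyEq_const {𝕜 F : Type*} [NontriviallyNormedField 𝕜]
    [NormedAddCommGroup F] [NormedSpace 𝕜 F] {f : 𝕜 → F} {f' : F} {y : 𝕜}
    (hf : HasDerivAt f f' y) (h : f =ᶠ[𝓝 y] fun _ => f y) : f' = 0 :=
  hf.unique ((hasDerivAt_const y (f y)).congr_of_eventuallyEq h)

/-- The key step in Example 4.7(2) of the paper: if
`Ψ(y) + K (A(y)/(1−P(y))) t^{1−P(y)}` does not depend on `y ∈ U` for every `t ≥ 2`
(where `P > 1`, `A > 0` on the open set `U` and all functions are differentiable),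
then `P' ≡ 0`, `A' ≡ 0` and `Ψ' ≡ 0` on `U`. -/
theorem constant_family_forces_constant_parameters
    (U : Set ℝ) (hU : IsOpen U)
    (P A Ψ P' A' Ψ' : ℝ → ℝ) (K : ℝ) (hK : 0 < K)
    (hP1 : ∀ y ∈ U, 1 < P y) (hA0 : ∀ y ∈ U, 0 < A y)
    (hP : ∀ y ∈ U, HasDerivAt P (P' y) y)
    (hA : ∀ y ∈ U, HasDerivAt A (A' y) y)
    (hΨ : ∀ y ∈ U, HasDerivAt Ψ (Ψ' y) y)
    (N₀ : ℝ → ℝ)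
    (hconst : ∀ y ∈ U, ∀ t : ℝ, 2 ≤ t →
      Ψ y + K * (A y / (1 - P y)) * t ^ (1 - P y) = N₀ t) :
    ∀ y ∈ U, P' y = 0 ∧ A' y = 0 ∧ Ψ' y = 0 := by
  intro y hy
  have hsame : ∀ᶠ z in 𝓝 y, Ψ z = Ψ y ∧ P z = P y ∧ A z = A y := by
    filter_upwards [hU.mem_nhds hy] with z hz
    have hfamily : ∀ᶠ t in atTop, Ψ z + K * (A z / (1 - P z)) * t ^ (1 - P z) =
        Ψ y + K * (A y / (1 - P y)) * t ^ (1 - P y) := by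
      filter_upwards [eventually_ge_atTop 2] with t ht
      rw [hconst z hz t ht, hconst y hy t ht]
    exact eq_and_eq_of_eventually_add_div_mul_rpow_eq hK.ne' (hP1 z hz) (hP1 y hy)
      (hA0 z hz).ne' hfamily
  exact ⟨(hP y hy).eq_zero_of_eventuallyEq_const (hsame.mono fun _ h => h.2.1),
    (hA y hy).eq_zero_of_eventuallyEq_const (hsame.mono fun _ h => h.2.2),
    (hΨ y hy).eq_zero_of_eventuallyEq_const (hsame.mono fun _ h => h.1)⟩
end
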